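/- Let G̃ be an enhanced graph and let S̃ be a non-split 5-configuration of G̃. Then: (1) if three edges of S̃ form a triangle of G̃, then all three of these edges are contract-proof; (2) if S̃ contains all three edges incident with some vertex of degree 3 of G̃, then all three of these edges are delete-proof. -/

import Mathlib

/-!  Common definitions: multigraphs, separations, width, minors,
Kirchhoff/Dodgson polynomials, Feynman 5-splitting, enhanced graphs. -/

noncomputable section

attribute [local instance] Classical.propDecidable

/-- A finite multigraph, given by finite vertex and edge types together with
source and target maps (an arbitrary orientation of each edge). -/
structure Multigraph : Type 1 where
  V : Type
  E : Type
  [fintypeV : Fintype V]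
  [fintypeE : Fintype E]
  src : E → V
  tgt : E → V

attribute [instance] Multigraph.fintypeV Multigraph.fintypeE

namespace Multigraph

variable (G : Multigraph)

/-- The endpoints of an edge as an unordered pair. -/
def ends (e : G.E) : Sym2 G.V := s(G.src e, G.tgt e)

/-- Incidence of a vertex with an edge. -/
def inc (v : G.V) (e : G.E) : Prop := v = G.src e ∨ v = G.tgt e

/-- `V(G_A)`: the vertices of the subgraph induced by an edge set `A`. -/
def edgeVerts (A : Set G.E) : Set G.V := {v | ∃ e ∈ A, G.inc v e}

/-- The order of the separation `(A, Aᶜ)` of the graph `G`,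
i.e. `|V(G_A) ∩ V(G_B)|` where `B = Aᶜ`. -/
def sepOrder (A : Set G.E) : ℕ := (G.edgeVerts A ∩ G.edgeVerts Aᶜ).ncard

/-- One step along an edge belonging to the edge set `A`. -/
def stepOn (A : Set G.E) (a b : G.V) : Prop :=
  ∃ e ∈ A, (G.src e = a ∧ G.tgt e = b) ∨ (G.src e = b ∧ G.tgt e = a)

/-- Reachability using only edges in `A`. -/
def reachOn (A : Set G.E) : G.V → G.V → Prop := Relation.ReflTransGen (G.stepOn A)

/-- Adjacency. -/
def Adj (a b : G.V) : Prop := G.stepOn Set.univ a b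

/-- One adjacency step staying inside the vertex set `U`. -/
def stepWithin (U : Set G.V) (a b : G.V) : Prop := a ∈ U ∧ b ∈ U ∧ G.Adj a b

/-- The subgraph induced by the vertex set `U` is (nonempty and) connected. -/
def ConnectedWithin (U : Set G.V) : Prop :=
  U.Nonempty ∧ ∀ a ∈ U, ∀ b ∈ U, Relation.ReflTransGen (G.stepWithin U) a b

/-- Connectivity of the multigraph. -/
def Connected : Prop := G.ConnectedWithin Set.univ

/-- A multigraph is simple if it has no loops and no parallel edges. -/
def Simple : Prop := (∀ e : G.E, G.src e ≠ G.tgt e) ∧ Function.Injective G.ends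

/-- 3-connectivity: at least 4 vertices, and removing fewer than 3 vertices
leaves a connected graph. -/
def ThreeConnected : Prop :=
  4 ≤ Fintype.card G.V ∧ ∀ S : Set G.V, S.ncard < 3 → G.ConnectedWithin Sᶜ

/-- The spanning subgraph with edge set `T` is connected. -/
def ConnectedOn (T : Set G.E) : Prop := ∀ a b : G.V, G.reachOn T a b

/-- The degree of `v` in the spanning subgraph with edge set `T`
(loops count twice). -/
def degOn (T : Set G.E) (v : G.V) : ℕ :=
  ({e ∈ T | G.src e = v}).ncard + ({e ∈ T | G.tgt e = v}).ncard

/-- The degree of a vertex (loops count twice). -/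
def degree (v : G.V) : ℕ := G.degOn Set.univ v

/-- An edge set is a forest (contains no cycle) iff every nonempty subset
has a vertex of degree exactly one. -/
def IsForest (T : Set G.E) : Prop :=
  ∀ T' ⊆ T, T'.Nonempty → ∃ v : G.V, G.degOn T' v = 1

/-- `T` is the edge set of a spanning tree of `G`. -/
def IsSpanningTree (T : Set G.E) : Prop := G.IsForest T ∧ G.ConnectedOn T

/-- The rank of an edge set in the cycle matroid `M(G)`:
the size of a largest forest contained in it. -/
def rk (A : Set G.E) : ℕ := sSup {n | ∃ T ⊆ A, G.IsForest T ∧ T.ncard = n}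

/-- The order of the separation `(A, Aᶜ)` in the cycle matroid `M(G)`,
namely `r(A) + r(Aᶜ) - r(E) + 1`. -/
def msepOrder (A : Set G.E) : ℕ := G.rk A + G.rk Aᶜ + 1 - G.rk Set.univ

/-- The number of connected components of `G_A`, the subgraph induced by the
edge set `A`. -/
def ncompOn (A : Set G.E) : ℕ :=
  ({C : Set G.V | ∃ v ∈ G.edgeVerts A, C = {w | G.reachOn A v w}}).ncard

/-- `G` has an edge ordering of width at most `k`: every prefix/suffix
separation has order at most `k`. -/
def WidthLE (k : ℕ) : Prop :=
  ∃ f : Fin (Fintype.card G.E) ≃ G.E,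
    ∀ ℓ : ℕ,
      G.sepOrder {e | ∃ i : Fin (Fintype.card G.E), f i = e ∧ (i : ℕ) < ℓ} ≤ k

/-- The width of `G`: the minimum width of an edge ordering. -/
def width : ℕ := sInf {k | G.WidthLE k}

/-- The minor of `G` obtained by deleting the edges in `D` and contracting the
edges in `C`. -/
def minorDC (D C : Set G.E) : Multigraph :=
  let rel : G.V → G.V → Prop := fun a b => ∃ e ∈ C, G.src e = a ∧ G.tgt e = b
  { V := Quot rel
    E := {e : G.E // e ∉ D ∪ C}
    fintypeV := @Fintype.ofFinite _ (Finite.of_surjective (Quot.mk rel) fun q => Quot.exists_rep q)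
    fintypeE := Fintype.ofFinite _
    src := fun e => Quot.mk rel (G.src e.1)
    tgt := fun e => Quot.mk rel (G.tgt e.1) }

/-- Deletion of a vertex (together with all incident edges). -/
def deleteVertex (v : G.V) : Multigraph :=
  { V := {w : G.V // w ≠ v}
    E := {e : G.E // ¬ G.inc v e}
    fintypeV := Fintype.ofFinite _
    fintypeE := Fintype.ofFinite _
    src := fun e => ⟨G.src e.1, fun h => e.2 (Or.inl h.symm)⟩
    tgt := fun e => ⟨G.tgt e.1, fun h => e.2 (Or.inr h.symm)⟩ }

/-- The edges having one endpoint in `X` and the other in `Y`. -/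
def crossEdges (X Y : Set G.V) : Set G.E :=
  {e | (G.src e ∈ X ∧ G.tgt e ∈ Y) ∨ (G.src e ∈ Y ∧ G.tgt e ∈ X)}

/-- `G` has `R` as a minor, via branch sets. -/
def HasMinor (R : Multigraph) : Prop :=
  ∃ X : R.V → Set G.V,
    (∀ v : R.V, G.ConnectedWithin (X v)) ∧
    (Pairwise fun v w => Disjoint (X v) (X w)) ∧
    ∀ v w : R.V, v ≠ w →
      ({f : R.E | R.ends f = s(v, w)}).ncard ≤ (G.crossEdges (X v) (X w)).ncard

/-- `D` is the edge set of a cycle of `G`. -/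
def IsCycleSet (D : Set G.E) : Prop :=
  D.Nonempty ∧ (∀ v ∈ G.edgeVerts D, G.degOn D v = 2) ∧
    ∀ a ∈ G.edgeVerts D, ∀ b ∈ G.edgeVerts D, G.reachOn D a b

/-- The side `A` of a separation on `X` is rich: for every `x ∈ X` there is a
cycle `D` avoiding `x` with at most one edge outside `A`. -/
def Rich (A : Set G.E) (X : Set G.V) : Prop :=
  ∀ x ∈ X, ∃ D : Set G.E, G.IsCycleSet D ∧ x ∉ G.edgeVerts D ∧ (D \ A).ncard ≤ 1

/-- The entry of the (edge × vertex) incidence matrix, as a polynomial. -/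
def incCol (e : G.E) (v : G.V) : MvPolynomial G.E ℤ :=
  (if G.src e = v then 1 else 0) - (if G.tgt e = v then 1 else 0)

/-- The expanded Kirchhoff matrix `M_G` (with the column of `v0` deleted). -/
def bigMatrix (v0 : G.V) :
    Matrix (G.E ⊕ {v : G.V // v ≠ v0}) (G.E ⊕ {v : G.V // v ≠ v0}) (MvPolynomial G.E ℤ) :=
  Matrix.of fun r c =>
    match r, c with
    | Sum.inl e, Sum.inl f => if e = f then MvPolynomial.X e else 0
    | Sum.inl e, Sum.inr v => G.incCol e v.1
    | Sum.inr v, Sum.inl e => - G.incCol e v.1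
    | Sum.inr _, Sum.inr _ => 0

/-- The Dodgson polynomial `Ψ^{I,J}_K`: delete the rows indexed by `I` and the
columns indexed by `J` from `M_G`, take the determinant, and set `x_e = 0`
for `e ∈ K`.  (It is well defined up to an overall sign.) -/
def dodgson (v0 : G.V) (I J K : Set G.E) : MvPolynomial G.E ℤ :=
  if h : Nonempty ({e : G.E // e ∉ I} ≃ {e : G.E // e ∉ J}) then
    MvPolynomial.aeval (fun e => if e ∈ K then (0 : MvPolynomial G.E ℤ) else MvPolynomial.X e)
      (Matrix.det (Matrix.of fun r c =>
        G.bigMatrix v0 (Sum.map Subtype.val id r) (Sum.map (fun x => (h.some x).1) id c)))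
  else 0

/-- `(I,J,K)` is one of the 30 Dodgson configurations associated with the
5-configuration `S`. -/
def DodgsonConfig (S I J K : Set G.E) : Prop :=
  I ∪ J ∪ K = S ∧
    ((I.ncard = 2 ∧ J.ncard = 2 ∧ K.ncard = 1 ∧ I ∩ J = ∅ ∧ I ∩ K = ∅ ∧ J ∩ K = ∅) ∨
      (I.ncard = 3 ∧ J.ncard = 3 ∧ K = ∅ ∧ (I ∩ J).ncard = 1))

/-- The 5-configuration `S` splits: one of its 30 associated Dodgson
polynomials is identically zero. -/
def ConfigSplits (S : Set G.E) : Prop :=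
  ∃ I J K : Set G.E, G.DodgsonConfig S I J K ∧ ∀ v0 : G.V, G.dodgson v0 I J K = 0

/-- `G` is Feynman 5-split: every 5-configuration splits. -/
def FeynmanSplit : Prop := ∀ S : Set G.E, S.ncard = 5 → G.ConfigSplits S

/-- `(U, F)` is a subgraph of `G` (every edge of `F` has both ends in `U`). -/
def IsSubgraphPair (U : Set G.V) (F : Set G.E) : Prop :=
  ∀ e ∈ F, G.src e ∈ U ∧ G.tgt e ∈ U

/-- `G` decomposes into edge-disjoint subgraphs `G₁ ∪ G₂ = G` with
`|V(G₁) ∩ V(G₂)| ≤ 2` and `|E(G₁) ∩ S| = 2`, or with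
`|V(G₁) ∩ V(G₂)| = 1` and `|E(G₁) ∩ S| = 1`. -/
def splitWitness (S : Set G.E) : Prop :=
  ∃ (U1 U2 : Set G.V) (F1 F2 : Set G.E),
    G.IsSubgraphPair U1 F1 ∧ G.IsSubgraphPair U2 F2 ∧
    Disjoint F1 F2 ∧ U1 ∪ U2 = Set.univ ∧ F1 ∪ F2 = Set.univ ∧
    (((U1 ∩ U2).ncard ≤ 2 ∧ (F1 ∩ S).ncard = 2) ∨
      ((U1 ∩ U2).ncard = 1 ∧ (F1 ∩ S).ncard = 1))

/-- A separation of order at most 1 with edges of `S` on both sides, or a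
("bad") 2-separation with `min{|A ∩ S|, |B ∩ S|} = 2`. -/
def badSplitSep (S : Set G.E) : Prop :=
  ∃ A : Set G.E,
    (G.sepOrder A ≤ 1 ∧ (A ∩ S).Nonempty ∧ (Aᶜ ∩ S).Nonempty) ∨
      (G.sepOrder A = 2 ∧ min (A ∩ S).ncard (Aᶜ ∩ S).ncard = 2)

/-- Isomorphism of multigraphs. -/
def IsoTo (G' : Multigraph) : Prop :=
  ∃ (α : G.V ≃ G'.V) (β : G.E ≃ G'.E),
    ∀ e : G.E, G'.ends (β e) = Sym2.map α (G.ends e)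

/-- `G` is a tree. -/
def IsTree : Prop := G.Connected ∧ G.IsForest Set.univ

/-- Every vertex has degree 1 or 3. -/
def IsCubic : Prop := ∀ v : G.V, G.degree v = 1 ∨ G.degree v = 3

/-- A leaf. -/
def IsLeaf (v : G.V) : Prop := G.degree v = 1

/-- A cubic caterpillar: a cubic tree whose non-leaf vertices induce a path. -/
def IsCubicCaterpillar : Prop :=
  G.IsTree ∧ G.IsCubic ∧
    (∀ a ∈ {v : G.V | ¬ G.IsLeaf v}, ∀ b ∈ {v : G.V | ¬ G.IsLeaf v},
      Relation.ReflTransGen (G.stepWithin {v : G.V | ¬ G.IsLeaf v}) a b) ∧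
    ∀ v : G.V, ¬ G.IsLeaf v →
      ({e : G.E | G.inc v e ∧ ∃ w : G.V, ¬ G.IsLeaf w ∧ G.inc w e ∧ w ≠ v}).ncard ≤ 2

/-- The branch decomposition `(T, φ)` of the cycle matroid `M(G)` has width at
most `k`: removing any edge `f` of `T` gives a separation of the ground set
of matroid order at most `k`. -/
def branchWidthLE (T : Multigraph) (φ : G.E → T.V) (k : ℕ) : Prop :=
  ∀ f : T.E,
    G.msepOrder {e : G.E | φ e ∈ {x : T.V | T.reachOn {f}ᶜ (T.src f) x}} ≤ k

/-- `(T, φ)` is a branch decomposition of `M(G)` over a cubic caterpillar. -/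
def IsCatDecomp (T : Multigraph) (φ : G.E → T.V) : Prop :=
  T.IsCubicCaterpillar ∧ Function.Injective φ ∧ ∀ e : G.E, T.IsLeaf (φ e)

/-- The caterpillar width of the cycle matroid `M(G)`. -/
def catWidth : ℕ :=
  sInf {k | ∃ (T : Multigraph) (φ : G.E → T.V), G.IsCatDecomp T φ ∧ G.branchWidthLE T φ k}

end Multigraph

/-! ### Concrete graphs -/

/-- The complete graph `K₅`. -/
def K5m : Multigraph where
  V := Fin 5
  E := {p : Fin 5 × Fin 5 // p.1 < p.2}
  src := fun e => e.1.1
  tgt := fun e => e.1.2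

/-- The complete bipartite graph `K₃,₃`. -/
def K33m : Multigraph where
  V := Fin 3 ⊕ Fin 3
  E := Fin 3 × Fin 3
  src := fun e => Sum.inl e.1
  tgt := fun e => Sum.inr e.2

/-- The cube (3-dimensional hypercube) graph `C`. -/
def cubeM : Multigraph where
  V := Fin 2 × Fin 2 × Fin 2
  E := Fin 3 × Fin 2 × Fin 2
  src := fun e =>
    if e.1 = 0 then (0, e.2.1, e.2.2) else if e.1 = 1 then (e.2.1, 0, e.2.2)
      else (e.2.1, e.2.2, 0)
  tgt := fun e =>
    if e.1 = 0 then (1, e.2.1, e.2.2) else if e.1 = 1 then (e.2.1, 1, e.2.2)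
      else (e.2.1, e.2.2, 1)

/-- The octahedron graph `O = K₂,₂,₂`. -/
def octaM : Multigraph where
  V := Fin 3 × Fin 2
  E := {p : (Fin 3 × Fin 2) × (Fin 3 × Fin 2) // p.1.1 < p.2.1}
  src := fun e => e.1.1
  tgt := fun e => e.1.2

/-- The edges of the graph `H` (the cube after a Y–Δ transformation at one
vertex): vertices `0,1,2` form the new triangle, `6` is the antipodal vertex. -/
def hEdgeList : List (Fin 7 × Fin 7) :=
  [(0,1), (0,2), (1,2), (0,3), (0,4), (1,3), (1,5), (2,4), (2,5), (3,6), (4,6), (5,6)]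

/-- The graph `H`, one Δ–Y away from each of the cube and the octahedron. -/
def Hm : Multigraph where
  V := Fin 7
  E := {p : Fin 7 × Fin 7 // p ∈ hEdgeList}
  src := fun e => e.1.1
  tgt := fun e => e.1.2

/-- The complete graph `K₄`. -/
def K4m : Multigraph where
  V := Fin 4
  E := {p : Fin 4 × Fin 4 // p.1 < p.2}
  src := fun e => e.1.1
  tgt := fun e => e.1.2

/-- `K₅⁻`, the complete graph on 5 vertices minus the edge `{3,4}`. -/
def K5minusM : Multigraph where
  V := Fin 5
  E := {p : Fin 5 × Fin 5 // p.1 < p.2 ∧ ¬(p.1 = 3 ∧ p.2 = 4)}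
  src := fun e => e.1.1
  tgt := fun e => e.1.2

/-- The wheel `W_k`: centre `none`; rim edges `Sum.inl i` join `some i` to
`some (i+1)`, spoke edges `Sum.inr i` join the centre to `some i`. -/
def wheelM (k : ℕ) : Multigraph where
  V := Option (Fin k)
  E := Fin k ⊕ Fin k
  src := Sum.elim (fun i => some i) (fun _ => none)
  tgt := Sum.elim (fun i => some (finRotate k i)) (fun i => some i)

/-! ### Enhanced graphs -/

/-- An enhanced graph: a graph together with sets of contract-proof and
delete-proof edges. -/
structure EGraph : Type 1 where
  G : Multigraph
  Cp : Set G.E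
  Dp : Set G.E

namespace EGraph

/-- The 5-configuration `S` of an enhanced graph splits. -/
def Splits (H : EGraph) (S : Set H.G.E) : Prop :=
  H.G.badSplitSep S ∨
    (∃ f ∈ S \ H.Dp, (H.G.minorDC {f} ∅).badSplitSep {e | e.1 ∈ S}) ∨
    (∃ f ∈ S \ H.Cp, (H.G.minorDC ∅ {f}).badSplitSep {e | e.1 ∈ S})

/-- An enhanced graph is non-split if it has a non-split 5-configuration. -/
def NonSplit (H : EGraph) : Prop := ∃ S : Set H.G.E, S.ncard = 5 ∧ ¬ H.Splits S

/-- Deletion of an edge. -/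
def delE (H : EGraph) (f : H.G.E) : EGraph :=
  ⟨H.G.minorDC {f} ∅, {e | e.1 ∈ H.Cp}, {e | e.1 ∈ H.Dp}⟩

/-- Contraction of an edge. -/
def conE (H : EGraph) (f : H.G.E) : EGraph :=
  ⟨H.G.minorDC ∅ {f}, {e | e.1 ∈ H.Cp}, {e | e.1 ∈ H.Dp}⟩

/-- Deletion of a vertex. -/
def delV (H : EGraph) (v : H.G.V) : EGraph :=
  ⟨H.G.deleteVertex v, {e | e.1 ∈ H.Cp}, {e | e.1 ∈ H.Dp}⟩

/-- Remove an edge from the contract-proof set. -/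
def unprotC (H : EGraph) (f : H.G.E) : EGraph := ⟨H.G, H.Cp \ {f}, H.Dp⟩

/-- Remove an edge from the delete-proof set. -/
def unprotD (H : EGraph) (f : H.G.E) : EGraph := ⟨H.G, H.Cp, H.Dp \ {f}⟩

/-- Delete `f'` of a parallel pair `f, f'` and make `f` delete-proof. -/
def parallelReduce (H : EGraph) (f f' : H.G.E) : EGraph :=
  ⟨H.G.minorDC {f'} ∅, {e | e.1 ∈ H.Cp}, {e | e.1 ∈ H.Dp ∨ e.1 = f}⟩

/-- Contract `f'` of the two edges `f, f'` at a degree-two vertex and make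
`f` contract-proof. -/
def seriesReduce (H : EGraph) (f f' : H.G.E) : EGraph :=
  ⟨H.G.minorDC ∅ {f'}, {e | e.1 ∈ H.Cp ∨ e.1 = f}, {e | e.1 ∈ H.Dp}⟩

/-- One step of the enhanced-graph minor relation. -/
inductive MinorStep : EGraph → EGraph → Prop
  | delV (H : EGraph) (v : H.G.V) : MinorStep H (H.delV v)
  | delE (H : EGraph) (f : H.G.E) : MinorStep H (H.delE f)
  | conE (H : EGraph) (f : H.G.E) : MinorStep H (H.conE f)
  | unprotC (H : EGraph) (f : H.G.E) (hf : f ∈ H.Cp) : MinorStep H (H.unprotC f)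
  | unprotD (H : EGraph) (f : H.G.E) (hf : f ∈ H.Dp) : MinorStep H (H.unprotD f)
  | parallel (H : EGraph) (f f' : H.G.E) (hne : f ≠ f')
      (hpar : H.G.ends f = H.G.ends f') : MinorStep H (H.parallelReduce f f')
  | series (H : EGraph) (f f' : H.G.E) (v : H.G.V) (hne : f ≠ f')
      (hf : H.G.inc v f) (hf' : H.G.inc v f')
      (hdeg : ∀ e : H.G.E, H.G.inc v e → e = f ∨ e = f') :
      MinorStep H (H.seriesReduce f f')

/-- Minor-minimal non-split enhanced graph: non-split, but every proper
enhanced minor is split. -/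
def MinorMinimalNonSplit (H : EGraph) : Prop :=
  H.NonSplit ∧ ∀ H' : EGraph, Relation.TransGen MinorStep H H' → ¬ H'.NonSplit

/-- Isomorphism of enhanced graphs. -/
def IsoTo (H H' : EGraph) : Prop :=
  ∃ (α : H.G.V ≃ H'.G.V) (β : H.G.E ≃ H'.G.E),
    (∀ e : H.G.E, H'.G.ends (β e) = Sym2.map α (H.G.ends e)) ∧
    (∀ e : H.G.E, β e ∈ H'.Cp ↔ e ∈ H.Cp) ∧
    (∀ e : H.G.E, β e ∈ H'.Dp ↔ e ∈ H.Dp)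

end EGraph

/-- The edge `01` of `K₄`. -/
def e01K4 : K4m.E := ⟨(0, 1), by decide⟩

/-- The enhanced graph `K₄(1)`: all edges of `K₄` except one are both
contract-proof and delete-proof. -/
def K4one : EGraph := ⟨K4m, {e | e ≠ e01K4}, {e | e ≠ e01K4}⟩

/-! ### The statement -/

open Multigraph


namespace Multigraph

variable {G : Multigraph}

theorem inc_iff_mem_ends {v : G.V} {e : G.E} : G.inc v e ↔ v ∈ G.ends e :=
  Sym2.mem_iff.symm

theorem degree_eq_ncard_add_ncard (v : G.V) :
    G.degree v = {e | G.src e = v}.ncard + {e | G.tgt e = v}.ncard := by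
  simp only [degree, degOn, Set.sep_univ]

theorem ncard_setOf_inc_le_degree (v : G.V) : {e | G.inc v e}.ncard ≤ G.degree v := by
  have hsub : {e | G.inc v e} ⊆ {e | G.src e = v} ∪ {e | G.tgt e = v} :=
    fun e he => he.imp Eq.symm Eq.symm
  rw [degree_eq_ncard_add_ncard]
  exact (Set.ncard_le_ncard hsub).trans (Set.ncard_union_le _ _)

theorem degree_le_two_mul_ncard_setOf_inc (v : G.V) :
    G.degree v ≤ 2 * {e | G.inc v e}.ncard := by
  have hsrc : {e | G.src e = v}.ncard ≤ {e | G.inc v e}.ncard :=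
    Set.ncard_le_ncard fun e he => Or.inl (Eq.symm he)
  have htgt : {e | G.tgt e = v}.ncard ≤ {e | G.inc v e}.ncard :=
    Set.ncard_le_ncard fun e he => Or.inr (Eq.symm he)
  rw [degree_eq_ncard_add_ncard]
  omega

theorem sepOrder_le_two_of_edgeVerts_subset_pair {A : Set G.E} {x y : G.V}
    (h : G.edgeVerts A ⊆ {x, y}) : G.sepOrder A ≤ 2 :=
  (Set.ncard_le_ncard (Set.inter_subset_left.trans h)).trans
    ((Set.ncard_insert_le _ _).trans_eq (by rw [Set.ncard_singleton]))

/-- Every vertex shared by the star at `v` and the rest of the graph is the far end of an edge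
of the star. -/
theorem sepOrder_setOf_inc_le (v : G.V) :
    G.sepOrder {e | G.inc v e} ≤ {e | G.inc v e}.ncard := by
  let farEnd : G.E → G.V := fun e => if G.src e = v then G.tgt e else G.src e
  have hsub : G.edgeVerts {e | G.inc v e} ∩ G.edgeVerts {e | G.inc v e}ᶜ ⊆
      farEnd '' {e | G.inc v e} := by
    rintro w ⟨⟨e, hve, hwe⟩, ⟨e', hve', hwe'⟩⟩
    have hwv : w ≠ v := by
      rintro rfl
      exact hve' hwe'
    refine ⟨e, hve, ?_⟩
    simp only [farEnd, inc] at hve hwe ⊢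
    split_ifs <;> grind
  exact (Set.ncard_le_ncard hsub).trans (Set.ncard_image_le (Set.toFinite _))

theorem badSplitSep_of_small_side {S A : Set G.E} (hAS : A ⊆ S) (hA : A.Nonempty)
    (hord : G.sepOrder A ≤ A.ncard) (hA2 : A.ncard ≤ 2) (hSA : 2 ≤ (S \ A).ncard) :
    G.badSplitSep S := by
  refine ⟨A, ?_⟩
  rw [Set.inter_eq_self_of_subset_left hAS, Set.inter_comm, ← Set.sdiff_eq]
  rcases Nat.lt_or_ge (G.sepOrder A) 2 with hlt | hge
  · exact Or.inl ⟨by omega, hA, Set.nonempty_of_ncard_ne_zero (by omega)⟩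
  · exact Or.inr ⟨by omega, by omega⟩

theorem ncard_setOf_val_mem_minorDC (D C T : Set G.E) :
    {e : (G.minorDC D C).E | e.1 ∈ T}.ncard = (T \ (D ∪ C)).ncard :=
  Set.ncard_subtype (· ∉ D ∪ C) T

theorem minorDC_ends (D C : Set G.E) (e : (G.minorDC D C).E) :
    (G.minorDC D C).ends e = (G.ends e.1).map (Quot.mk _) :=
  rfl

theorem minorDC_mk_eq_mk_of_mem {D C : Set G.E} {e : G.E} (he : e ∈ C) {a b : G.V}
    (hab : G.ends e = s(a, b)) :
    (Quot.mk _ a : (G.minorDC D C).V) = Quot.mk _ b := by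
  have hst : (Quot.mk _ (G.src e) : (G.minorDC D C).V) = Quot.mk _ (G.tgt e) :=
    Quot.sound ⟨e, he, rfl, rfl⟩
  rcases Sym2.eq_iff.mp hab with ⟨rfl, rfl⟩ | ⟨rfl, rfl⟩
  exacts [hst, hst.symm]

theorem minorDC_empty_inc_mk_iff (D : Set G.E) {v : G.V} {e : (G.minorDC D ∅).E} :
    (G.minorDC D ∅).inc (Quot.mk _ v) e ↔ G.inc v e.1 := by
  have hinj : Function.Injective (Quot.mk _ : G.V → (G.minorDC D ∅).V) :=
    fun a b hab =>
      congrArg (Quot.lift id fun _ _ ⟨_, h, _⟩ => absurd h (Set.notMem_empty _)) hab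
  exact or_congr hinj.eq_iff hinj.eq_iff

/-- Contracting one edge of a triangle makes the other two parallel, so they form a side of a
separation of order at most 2, while two further edges of `S` lie on the other side. -/
theorem badSplitSep_minorDC_contract_of_triangle {S : Set G.E} (hS : S.ncard = 5)
    {e f g : G.E} (he : e ∈ S) (hf : f ∈ S) (hg : g ∈ S) (hef : e ≠ f) (heg : e ≠ g)
    (hfg : f ≠ g) {a b c : G.V} (hab : G.ends e = s(a, b)) (hbc : G.ends f = s(b, c))
    (hac : G.ends g = s(a, c)) :
    (G.minorDC ∅ {e}).badSplitSep {x | x.1 ∈ S} := by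
  have hqab : (Quot.mk _ a : (G.minorDC ∅ {e}).V) = Quot.mk _ b :=
    minorDC_mk_eq_mk_of_mem (D := ∅) (Set.mem_singleton e) hab
  have hcard : {x : (G.minorDC ∅ {e}).E | x.1 ∈ ({f, g} : Set G.E)}.ncard = 2 := by
    rw [ncard_setOf_val_mem_minorDC, Set.empty_union,
      Set.sdiff_singleton_eq_self (by simp [hef, heg]), Set.ncard_pair hfg]
  have hverts : (G.minorDC ∅ {e}).edgeVerts {x | x.1 ∈ ({f, g} : Set G.E)} ⊆
      ({Quot.mk _ a, Quot.mk _ c} : Set (G.minorDC ∅ {e}).V) := by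
    rintro w ⟨x, hx | hx, hw⟩
    · rw [inc_iff_mem_ends, minorDC_ends, hx, hbc, Sym2.map_mk, ← hqab] at hw
      exact Sym2.mem_iff.mp hw
    · rw [inc_iff_mem_ends, minorDC_ends, hx, hac, Sym2.map_mk] at hw
      exact Sym2.mem_iff.mp hw
  refine badSplitSep_of_small_side (A := {x | x.1 ∈ ({f, g} : Set G.E)})
    (fun x hx => show x.1 ∈ S from hx.elim (· ▸ hf) fun h => Set.mem_singleton_iff.mp h ▸ hg)
    (Set.nonempty_of_ncard_ne_zero (by omega)) ?_ (by omega) ?_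
  · rw [hcard]
    exact sepOrder_le_two_of_edgeVerts_subset_pair hverts
  · change 2 ≤ {x : (G.minorDC ∅ {e}).E | x.1 ∈ S \ {f, g}}.ncard
    have hefg : ({e, f, g} : Set G.E) ⊆ S := by
      rintro x (rfl | rfl | rfl) <;> assumption
    rw [ncard_setOf_val_mem_minorDC, Set.empty_union, Set.sdiff_sdiff, Set.union_singleton,
      Set.ncard_sdiff hefg, hS, Set.ncard_eq_three.mpr ⟨e, f, g, hef, heg, hfg, rfl⟩]

/-- Since a loop counts twice in the degree, a vertex of degree 3 has two or three incident edges;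
deleting one leaves a nonempty star of at most two edges, which separates off with order at most
its size. -/
theorem badSplitSep_minorDC_delete_of_degree_eq_three {S : Set G.E} (hS : S.ncard = 5)
    {v : G.V} (hdeg : G.degree v = 3) (hsub : {e | G.inc v e} ⊆ S) {h : G.E}
    (hh : G.inc v h) :
    (G.minorDC {h} ∅).badSplitSep {x | x.1 ∈ S} := by
  have hT2 := degree_le_two_mul_ncard_setOf_inc v
  have hT3 := ncard_setOf_inc_le_degree v
  have hstar : {x : (G.minorDC {h} ∅).E | x.1 ∈ {e | G.inc v e}} =
      {x | (G.minorDC {h} ∅).inc (Quot.mk _ v) x} :=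
    Set.ext fun _ => (minorDC_empty_inc_mk_iff {h}).symm
  have hcard : {x : (G.minorDC {h} ∅).E | x.1 ∈ {e | G.inc v e}}.ncard =
      {e | G.inc v e}.ncard - 1 := by
    rw [ncard_setOf_val_mem_minorDC, Set.union_empty,
      Set.ncard_sdiff_singleton_of_mem (s := {e | G.inc v e}) hh]
  refine badSplitSep_of_small_side (A := {x | x.1 ∈ {e | G.inc v e}}) (fun x hx => hsub hx)
    (Set.nonempty_of_ncard_ne_zero (by omega)) ?_ (by omega) ?_
  · rw [hstar]
    exact sepOrder_setOf_inc_le _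
  · change 2 ≤ {x : (G.minorDC {h} ∅).E | x.1 ∈ S \ {e | G.inc v e}}.ncard
    rw [ncard_setOf_val_mem_minorDC, Set.union_empty,
      Set.sdiff_singleton_eq_self fun hS' => hS'.2 hh, Set.ncard_sdiff hsub, hS]
    omega

end Multigraph

namespace EGraph

variable {H : EGraph} {S : Set H.G.E}

theorem mem_Cp_of_not_splits (hns : ¬ H.Splits S) {f : H.G.E} (hf : f ∈ S)
    (hbad : (H.G.minorDC ∅ {f}).badSplitSep {x | x.1 ∈ S}) : f ∈ H.Cp :=
  by_contra fun hC => hns (Or.inr (Or.inr ⟨f, ⟨hf, hC⟩, hbad⟩))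

theorem mem_Dp_of_not_splits (hns : ¬ H.Splits S) {f : H.G.E} (hf : f ∈ S)
    (hbad : (H.G.minorDC {f} ∅).badSplitSep {x | x.1 ∈ S}) : f ∈ H.Dp :=
  by_contra fun hD => hns (Or.inr (Or.inl ⟨f, ⟨hf, hD⟩, hbad⟩))

end EGraph

theorem stmt14 (H : EGraph) (S : Set H.G.E) (hS : S.ncard = 5) (hns : ¬ H.Splits S) :
    (∀ e ∈ S, ∀ f ∈ S, ∀ g ∈ S, e ≠ f → e ≠ g → f ≠ g →
      (∃ a b c : H.G.V, a ≠ b ∧ a ≠ c ∧ b ≠ c ∧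
        H.G.ends e = s(a, b) ∧ H.G.ends f = s(b, c) ∧ H.G.ends g = s(a, c)) →
      (e ∈ H.Cp ∧ f ∈ H.Cp ∧ g ∈ H.Cp)) ∧
    (∀ v : H.G.V, H.G.degree v = 3 → {e | H.G.inc v e} ⊆ S →
      {e | H.G.inc v e} ⊆ H.Dp) := by
  refine ⟨?_, fun v hdeg hsub h hh => EGraph.mem_Dp_of_not_splits hns (hsub hh)
    (badSplitSep_minorDC_delete_of_degree_eq_three hS hdeg hsub hh)⟩
  rintro e he f hf g hg hef heg hfg ⟨a, b, c, -, -, -, hab, hbc, hac⟩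
  refine ⟨EGraph.mem_Cp_of_not_splits hns he ?_, EGraph.mem_Cp_of_not_splits hns hf ?_,
    EGraph.mem_Cp_of_not_splits hns hg ?_⟩
  · exact badSplitSep_minorDC_contract_of_triangle hS he hf hg hef heg hfg hab hbc hac
  · exact badSplitSep_minorDC_contract_of_triangle hS hf hg he hfg hef.symm heg.symm hbc
      (hac.trans Sym2.eq_swap) (hab.trans Sym2.eq_swap)
  · exact badSplitSep_minorDC_contract_of_triangle hS hg hf he hfg.symm heg.symm hef.symm hac
      (hbc.trans Sym2.eq_swap) hab
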